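/- arXiv:2412.20491 — 2 statements merged into one kernel-verified Lean document; each statement's English description precedes it below -/
import Mathlib

section
/- Let α, β > 0 with α/β = k/l where k, l are relatively prime positive integers, and consider on the torus T² = ℝ²/ℤ² the linear flow generated by Y = aα ∂_x + bβ ∂_y with a + b = 1, modulo the foliation generated by X = α ∂_x − β ∂_y. Then the minimal t > 0 such that the point (aαt, bβt) ∈ ℝ² lies in the set A = {(sα, −sβ) + ℤ² : s ∈ ℝ} equals t = 1/(kβ). -/
/-- let `α, β > 0` with `α/β = k/l`, `k, l` coprime positive integers, and
`a + b = 1`.  The minimal `t > 0` such that the point `(aαt, bβt) ∈ ℝ²` lies in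
`A = {(sα, −sβ) + ℤ² : s ∈ ℝ}` equals `t = 1/(kβ)`. -/
theorem statement15 (α β : ℝ) (hα : 0 < α) (hβ : 0 < β)
    (k l : ℕ) (hk : 0 < k) (hl : 0 < l) (hcop : Nat.Coprime k l)
    (hratio : α / β = (k : ℝ) / (l : ℝ))
    (a b : ℝ) (hab : a + b = 1) :
    IsLeast {t : ℝ | 0 < t ∧
        ∃ (s : ℝ) (m n : ℤ),
          (a * α * t, b * β * t) = (s * α + (m : ℝ), -(s * β) + (n : ℝ))}
      (1 / (k * β)) := by
  have hk' : (0:ℝ) < k := by exact_mod_cast hk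
  have hl' : (0:ℝ) < l := by exact_mod_cast hl
  have hα' : α ≠ 0 := hα.ne'
  have hβ' : β ≠ 0 := hβ.ne'
  have hαl : α * l = β * k := by
    field_simp at hratio
    linarith
  constructor
  · refine ⟨by positivity, ?_⟩
    obtain ⟨u, v, huv⟩ : ∃ u v : ℤ, u * k + v * l = 1 := by
      have := Nat.isCoprime_iff_coprime.mpr hcop
      obtain ⟨u, v, h⟩ := this
      exact ⟨u, v, h⟩
    have huv' : (u:ℝ) * k + (v:ℝ) * l = 1 := by exact_mod_cast huv
    refine ⟨a / (k * β) - v / α, v, u, ?_⟩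
    have h1 : a * α * (1 / (k * β)) = (a / (k * β) - v / α) * α + (v : ℝ) := by
      field_simp
      ring
    have h2 : b * β * (1 / (k * β)) = -((a / (k * β) - v / α) * β) + (u : ℝ) := by
      field_simp
      linear_combination α * hab - α * huv' + (v:ℝ) * hαl
    exact Prod.ext h1 h2
  · rintro t ⟨ht, s, m, n, heq⟩
    rw [Prod.mk.injEq] at heq
    obtain ⟨eq1, eq2⟩ := heq
    have h3 : α * β * t = m * β + n * α := by
      linear_combination β * eq1 + α * eq2 - α * β * t * hab
    have key : (k:ℝ) * β * t = m * l + n * k := by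
      apply mul_left_cancel₀ hα'
      linear_combination (k:ℝ) * h3 - (m:ℝ) * hαl
    have hpos : (0:ℝ) < (m:ℝ) * l + n * k := by
      rw [← key]; positivity
    have hint : (1:ℤ) ≤ m * l + n * k := by
      have : (0:ℤ) < m * l + n * k := by exact_mod_cast hpos
      omega
    have hint' : (1:ℝ) ≤ (m:ℝ) * l + n * k := by exact_mod_cast hint
    rw [div_le_iff₀ (by positivity)]
    nlinarith [key, hint']
end

section
/- The 1-form η(x₁, x₂, t) = t·η₁(x₁) + η₂(x₂) on M₁ × M₂ × ℝ* is a contact form whenever η₁ and η₂ are contact forms on M₁ and M₂, and its Reeb vector field is R₂ (the lift of the Reeb field of η₂). -/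
noncomputable section

/-- Exterior differential of a 1-form on a normed space, given as a bi-function:
`dη(x)(u,v) = D_u(η(·)(v)) − D_v(η(·)(u))`. -/
def dOne {E : Type*} [NormedAddCommGroup E] [NormedSpace ℝ E]
    (η : E → E → ℝ) (x u v : E) : ℝ :=
  fderiv ℝ (fun y => η y v) x u - fderiv ℝ (fun y => η y u) x v

/-- Exterior differential of a 2-form given as a tri-function. -/
def dTwo {E : Type*} [NormedAddCommGroup E] [NormedSpace ℝ E]
    (ω : E → E → E → ℝ) (x u v w : E) : ℝ :=
  fderiv ℝ (fun y => ω y v w) x u - fderiv ℝ (fun y => ω y u w) x v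
    + fderiv ℝ (fun y => ω y u v) x w

/-- The contact condition for a 1-form at a point: `η x ≠ 0` and `dη` is nondegenerate
on `ker (η x)`.  For a 1-form on a `(2n+1)`-dimensional space this is equivalent to
`η ∧ (dη)^n` being nonzero at `x`. -/
def IsContactAt {E : Type*} [NormedAddCommGroup E] [NormedSpace ℝ E]
    (η : E → E → ℝ) (x : E) : Prop :=
  (∃ v, η x v ≠ 0) ∧
    ∀ v, η x v = 0 → (∀ w, η x w = 0 → dOne η x v w = 0) → v = 0

lemma dOne_zero_left {E : Type*} [NormedAddCommGroup E] [NormedSpace ℝ E]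
    (η : E → E → ℝ) (hlin : ∀ x, IsLinearMap ℝ (η x)) (x w : E) :
    dOne η x (0 : E) w = 0 := by
  have h0 : (fun y => η y (0:E)) = fun _ => (0:ℝ) := funext fun y => (hlin y).map_zero
  simp [dOne, h0]

lemma dOne_zero_right {E : Type*} [NormedAddCommGroup E] [NormedSpace ℝ E]
    (η : E → E → ℝ) (hlin : ∀ x, IsLinearMap ℝ (η x)) (x v : E) :
    dOne η x v 0 = 0 := by
  have h0 : (fun y => η y (0:E)) = fun _ => (0:ℝ) := funext fun y => (hlin y).map_zero
  simp [dOne, h0]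

lemma dOne_prod {E₁ E₂ : Type*} [NormedAddCommGroup E₁] [NormedSpace ℝ E₁]
    [NormedAddCommGroup E₂] [NormedSpace ℝ E₂]
    (η₁ : E₁ → E₁ → ℝ) (hsm₁ : ContDiff ℝ (⊤ : ℕ∞) (Function.uncurry η₁))
    (η₂ : E₂ → E₂ → ℝ) (hsm₂ : ContDiff ℝ (⊤ : ℕ∞) (Function.uncurry η₂))
    (η : E₁ × E₂ × ℝ → E₁ × E₂ × ℝ → ℝ)
    (hη : ∀ p w, η p w = p.2.2 * η₁ p.1 w.1 + η₂ p.2.1 w.2.1)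
    (p u w : E₁ × E₂ × ℝ) :
    dOne η p u w = u.2.2 * η₁ p.1 w.1 - w.2.2 * η₁ p.1 u.1
      + p.2.2 * dOne η₁ p.1 u.1 w.1 + dOne η₂ p.2.1 u.2.1 w.2.1 := by
  have hdiff₁ : ∀ v, Differentiable ℝ fun y => η₁ y v := fun v =>
    (hsm₁.comp (contDiff_id.prodMk contDiff_const)).differentiable (by simp)
  have hdiff₂ : ∀ v, Differentiable ℝ fun y => η₂ y v := fun v =>
    (hsm₂.comp (contDiff_id.prodMk contDiff_const)).differentiable (by simp)
  have key : ∀ v z : E₁ × E₂ × ℝ,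
      fderiv ℝ (fun y => η y v) p z =
        z.2.2 * η₁ p.1 v.1 + p.2.2 * fderiv ℝ (fun a => η₁ a v.1) p.1 z.1
          + fderiv ℝ (fun b => η₂ b v.2.1) p.2.1 z.2.1 := by
    intro v z
    have hT : HasFDerivAt (fun y : E₁ × E₂ × ℝ => y.2.2)
        ((ContinuousLinearMap.snd ℝ E₂ ℝ).comp (ContinuousLinearMap.snd ℝ E₁ (E₂ × ℝ))) p :=
      ((ContinuousLinearMap.snd ℝ E₂ ℝ).comp (ContinuousLinearMap.snd ℝ E₁ (E₂ × ℝ))).hasFDerivAt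
    have hA : HasFDerivAt (fun y : E₁ × E₂ × ℝ => η₁ y.1 v.1)
        ((fderiv ℝ (fun a => η₁ a v.1) p.1).comp (ContinuousLinearMap.fst ℝ E₁ (E₂ × ℝ))) p :=
      ((hdiff₁ v.1 p.1).hasFDerivAt).comp p (hasFDerivAt_fst)
    have hB : HasFDerivAt (fun y : E₁ × E₂ × ℝ => η₂ y.2.1 v.2.1)
        ((fderiv ℝ (fun b => η₂ b v.2.1) p.2.1).comp
          ((ContinuousLinearMap.fst ℝ E₂ ℝ).comp (ContinuousLinearMap.snd ℝ E₁ (E₂ × ℝ)))) p := by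
      have h21 : HasFDerivAt (fun y : E₁ × E₂ × ℝ => y.2.1)
          ((ContinuousLinearMap.fst ℝ E₂ ℝ).comp (ContinuousLinearMap.snd ℝ E₁ (E₂ × ℝ))) p :=
        ((ContinuousLinearMap.fst ℝ E₂ ℝ).comp (ContinuousLinearMap.snd ℝ E₁ (E₂ × ℝ))).hasFDerivAt
      exact ((hdiff₂ v.2.1 p.2.1).hasFDerivAt).comp p h21
    have hF : HasFDerivAt (fun y : E₁ × E₂ × ℝ => y.2.2 * η₁ y.1 v.1 + η₂ y.2.1 v.2.1) _ p :=
      (hT.mul hA).add hB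
    have hfun : (fun y => η y v) = fun y : E₁ × E₂ × ℝ => y.2.2 * η₁ y.1 v.1 + η₂ y.2.1 v.2.1 :=
      funext fun y => hη y v
    rw [hfun, hF.fderiv]
    simp only [ContinuousLinearMap.add_apply, ContinuousLinearMap.smul_apply,
      ContinuousLinearMap.coe_comp', Function.comp_apply, ContinuousLinearMap.coe_fst',
      ContinuousLinearMap.coe_snd', smul_eq_mul]
    ring
  simp only [dOne, key]
  ring


/-- if `η₁, η₂` are contact forms on `M₁, M₂`, the 1-form
`η = t·η₁ + η₂` on `M₁ × M₂ × ℝ*` is a contact form, and its Reeb vector field is the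
lift `(0, R₂, 0)` of the Reeb field of `η₂`. -/
theorem statement18 {m n : ℕ} {E₁ E₂ : Type*}
    [NormedAddCommGroup E₁] [NormedSpace ℝ E₁] [FiniteDimensional ℝ E₁]
    [NormedAddCommGroup E₂] [NormedSpace ℝ E₂] [FiniteDimensional ℝ E₂]
    (hdim₁ : Module.finrank ℝ E₁ = 2 * m + 1) (hdim₂ : Module.finrank ℝ E₂ = 2 * n + 1)
    (η₁ : E₁ → E₁ → ℝ) (hlin₁ : ∀ x, IsLinearMap ℝ (η₁ x))
    (hsm₁ : ContDiff ℝ (⊤ : ℕ∞) (Function.uncurry η₁)) (hc₁ : ∀ x, IsContactAt η₁ x)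
    (η₂ : E₂ → E₂ → ℝ) (hlin₂ : ∀ x, IsLinearMap ℝ (η₂ x))
    (hsm₂ : ContDiff ℝ (⊤ : ℕ∞) (Function.uncurry η₂)) (hc₂ : ∀ x, IsContactAt η₂ x)
    (R₂ : E₂ → E₂) (hR₂ : ∀ x, η₂ x (R₂ x) = 1 ∧ ∀ v, dOne η₂ x (R₂ x) v = 0)
    -- the 1-form η = t·η₁ + η₂ on M₁ × M₂ × ℝ*
    (η : E₁ × E₂ × ℝ → E₁ × E₂ × ℝ → ℝ)
    (hη : ∀ p w, η p w = p.2.2 * η₁ p.1 w.1 + η₂ p.2.1 w.2.1) :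
    ∀ p : E₁ × E₂ × ℝ, p.2.2 ≠ 0 →
      IsContactAt η p ∧
      η p ((0 : E₁), R₂ p.2.1, (0 : ℝ)) = 1 ∧
      ∀ w, dOne η p ((0 : E₁), R₂ p.2.1, (0 : ℝ)) w = 0 := by
  intro p ht
  have hform := dOne_prod η₁ hsm₁ η₂ hsm₂ η hη p
  have hReeb1 : η p ((0 : E₁), R₂ p.2.1, (0 : ℝ)) = 1 := by
    rw [hη]; simp [(hlin₁ p.1).map_zero, (hR₂ p.2.1).1]
  have hReeb2 : ∀ w, dOne η p ((0 : E₁), R₂ p.2.1, (0 : ℝ)) w = 0 := by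
    intro w
    rw [hform]
    simp [(hlin₁ p.1).map_zero, dOne_zero_left η₁ hlin₁, (hR₂ p.2.1).2 w.2.1]
  refine ⟨⟨⟨((0 : E₁), R₂ p.2.1, (0 : ℝ)), by rw [hReeb1]; norm_num⟩, ?_⟩, hReeb1, hReeb2⟩
  intro v hv hker
  have hK : ∀ w, η p w = 0 →
      v.2.2 * η₁ p.1 w.1 - w.2.2 * η₁ p.1 v.1
        + p.2.2 * dOne η₁ p.1 v.1 w.1 + dOne η₂ p.2.1 v.2.1 w.2.1 = 0 := by
    intro w hw
    rw [← hform v w]; exact hker w hw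
  -- Step A : η₁ p.1 v.1 = 0
  have hA : η₁ p.1 v.1 = 0 := by
    have h := hK ((0 : E₁), (0 : E₂), (1 : ℝ)) (by
      rw [hη]; simp [(hlin₁ p.1).map_zero, (hlin₂ p.2.1).map_zero])
    simp only [(hlin₁ p.1).map_zero, dOne_zero_right η₁ hlin₁,
      dOne_zero_right η₂ hlin₂] at h
    linarith
  -- Step B : η₂ p.2.1 v.2.1 = 0
  have hB : η₂ p.2.1 v.2.1 = 0 := by
    have := hv
    rw [hη, hA] at this
    linarith
  -- Step C : v.2.1 = 0
  have hC : v.2.1 = 0 := by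
    refine (hc₂ p.2.1).2 v.2.1 hB ?_
    intro w₂ hw₂
    have h := hK ((0 : E₁), w₂, (0 : ℝ)) (by
      rw [hη]; simp [(hlin₁ p.1).map_zero, hw₂])
    simpa [(hlin₁ p.1).map_zero, dOne_zero_right η₁ hlin₁] using h
  -- Step D : the mixed equation
  have hD : ∀ w₁ : E₁, v.2.2 * η₁ p.1 w₁ + p.2.2 * dOne η₁ p.1 v.1 w₁ = 0 := by
    intro w₁
    have hker' : η p (w₁, (-(p.2.2 * η₁ p.1 w₁)) • R₂ p.2.1, (0 : ℝ)) = 0 := by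
      rw [hη]
      simp only [(hlin₂ p.2.1).map_smul, smul_eq_mul, (hR₂ p.2.1).1]
      ring
    have h := hK (w₁, (-(p.2.2 * η₁ p.1 w₁)) • R₂ p.2.1, (0 : ℝ)) hker'
    rw [hC] at h
    simpa [dOne_zero_left η₂ hlin₂] using h
  -- Step E : v.1 = 0
  have hE : v.1 = 0 := by
    refine (hc₁ p.1).2 v.1 hA ?_
    intro w₁ hw₁
    have h := hD w₁
    rw [hw₁] at h
    have : p.2.2 * dOne η₁ p.1 v.1 w₁ = 0 := by linarith
    exact (mul_eq_zero.1 this).resolve_left ht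
  -- Step F : v.2.2 = 0
  have hF : v.2.2 = 0 := by
    obtain ⟨w₁, hw₁⟩ := (hc₁ p.1).1
    have h := hD w₁
    rw [hE, dOne_zero_left η₁ hlin₁] at h
    have : v.2.2 * η₁ p.1 w₁ = 0 := by linarith
    exact (mul_eq_zero.1 this).resolve_right hw₁
  have : v = (v.1, v.2.1, v.2.2) := rfl
  rw [this, hC, hE, hF]
  rfl
end
end
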